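/- (vNM Utility Existence) Let X be a nonempty finite set and let ⪰ be a binary relation on the lotteries over X satisfying the vNM axioms (completeness, transitivity, continuity, and independence). Then there exists a utility function u : X → ℝ such that for all lotteries p and q over X, p ⪰ q if and only if EU(p, u) ≥ EU(q, u). -/

import Mathlib

/-- A lottery over a finite set `X`: a probability assignment that is
nonnegative and sums to one. -/
def Lottery (X : Type) [Fintype X] : Type :=
  { p : X → ℝ // (∀ x, 0 ≤ p x) ∧ ∑ x, p x = 1 }

/-- Convex combination (mixture) of two lotteries with weight `α`. -/
noncomputable def Lottery.mix {X : Type} [Fintype X] (p q : Lottery X) (α : ℝ)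
    (hα0 : 0 ≤ α) (hα1 : α ≤ 1) : Lottery X :=
  ⟨fun x => α * p.val x + (1 - α) * q.val x, by
    refine ⟨fun x => ?_, ?_⟩
    · have hp := p.property.1 x
      have hq := q.property.1 x
      dsimp only
      nlinarith
    · dsimp only
      rw [Finset.sum_add_distrib, ← Finset.mul_sum, ← Finset.mul_sum,
        p.property.2, q.property.2]
      ring⟩

/-- Expected utility of lottery `p` with respect to utility function `u`. -/
noncomputable def expectedUtility {X : Type} [Fintype X] (p : Lottery X) (u : X → ℝ) : ℝ :=
  ∑ x, p.val x * u x

/-- Strict preference: `p ≻ q` iff `p ⪰ q` and not `q ⪰ p`. -/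
def strictPref {X : Type} [Fintype X] (pref : Lottery X → Lottery X → Prop)
    (p q : Lottery X) : Prop := pref p q ∧ ¬ pref q p

/-- Indifference: `p ∼ q` iff `p ⪰ q` and `q ⪰ p`. -/
def indiff {X : Type} [Fintype X] (pref : Lottery X → Lottery X → Prop)
    (p q : Lottery X) : Prop := pref p q ∧ pref q p

/-- Completeness axiom (A1a). -/
def PrefComplete {X : Type} [Fintype X] (pref : Lottery X → Lottery X → Prop) : Prop :=
  ∀ p q : Lottery X, pref p q ∨ pref q p

/-- Transitivity axiom (A1b). -/
def PrefTransitive {X : Type} [Fintype X] (pref : Lottery X → Lottery X → Prop) : Prop :=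
  ∀ p q r : Lottery X, pref p q → pref q r → pref p r

/-- Continuity axiom (A2). -/
def PrefContinuity {X : Type} [Fintype X] (pref : Lottery X → Lottery X → Prop) : Prop :=
  ∀ p q r : Lottery X, pref p q → pref q r → ¬ pref r p →
    ∃ (α β : ℝ) (h : 0 < α ∧ α < 1 ∧ 0 < β ∧ β < 1),
      strictPref pref (Lottery.mix p r α (le_of_lt h.1) (le_of_lt h.2.1)) q ∧
      strictPref pref q (Lottery.mix p r β (le_of_lt h.2.2.1) (le_of_lt h.2.2.2))

/-- Independence axiom (A3), strict-preference part. -/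
def PrefIndependence {X : Type} [Fintype X] (pref : Lottery X → Lottery X → Prop) : Prop :=
  ∀ (p q r : Lottery X) (α : ℝ) (h : 0 < α ∧ α ≤ 1),
    strictPref pref p q →
    strictPref pref (Lottery.mix p r α (le_of_lt h.1) h.2) (Lottery.mix q r α (le_of_lt h.1) h.2)

/-- Independence axiom (A3), indifference part. -/
def PrefIndepIndiff {X : Type} [Fintype X] (pref : Lottery X → Lottery X → Prop) : Prop :=
  ∀ (p q r : Lottery X) (α : ℝ) (h : 0 < α ∧ α ≤ 1),
    indiff pref p q →
    indiff pref (Lottery.mix p r α (le_of_lt h.1) h.2) (Lottery.mix q r α (le_of_lt h.1) h.2)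

/-! Let `b` and `w` be a best and a worst degenerate lottery; by independence every lottery lies
between them. If `b ∼ w`, all lotteries are indifferent and a constant utility works. Otherwise
independence makes `α ↦ mix b w α` strictly increasing, and continuity gives each outcome a weight
`u x` with `pure x ∼ mix b w (u x)`. Mixing these indifferences along a decomposition of `p` into
point masses gives `p ∼ mix b w (EU(p, u))`, so `p ⪰ q` iff `EU(p, u) ≥ EU(q, u)`. -/

theorem exists_forall_of_total_of_trans {α : Type*} [Finite α] [Nonempty α] (R : α → α → Prop)
    (htotal : ∀ a b, R a b ∨ R b a) (htrans : ∀ a b c, R a b → R b c → R a c) :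
    ∃ a, ∀ b, R a b := by
  have : IsTrans α (fun a b => ¬R b a) :=
    ⟨fun a b c hab hbc hca => hbc (htrans c a b hca ((htotal a b).resolve_right hab))⟩
  have : Std.Irrefl (fun a b : α => ¬R b a) := ⟨fun a h => h ((htotal a a).elim id id)⟩
  obtain ⟨a, -, ha⟩ :=
    (Finite.wellFounded_of_trans_of_irrefl (fun a b => ¬R b a)).has_min Set.univ Set.univ_nonempty
  exact ⟨a, fun b => not_not.1 (ha b trivial)⟩

namespace Lottery

variable {X : Type} [Fintype X]

theorem ext {p q : Lottery X} (h : ∀ x, p.val x = q.val x) : p = q :=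
  Subtype.ext (funext h)

theorem val_nonneg (p : Lottery X) (x : X) : 0 ≤ p.val x := p.property.1 x

theorem sum_val (p : Lottery X) : ∑ x, p.val x = 1 := p.property.2

theorem val_le_one (p : Lottery X) (x : X) : p.val x ≤ 1 :=
  (Finset.single_le_sum (fun y _ => p.val_nonneg y) (Finset.mem_univ x)).trans_eq p.sum_val

@[simp]
theorem mix_val (p q : Lottery X) (α : ℝ) (h0 : 0 ≤ α) (h1 : α ≤ 1) (x : X) :
    (mix p q α h0 h1).val x = α * p.val x + (1 - α) * q.val x := rfl

theorem mix_self (p : Lottery X) (α : ℝ) (h0 : 0 ≤ α) (h1 : α ≤ 1) : mix p p α h0 h1 = p :=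
  ext fun x => by simp only [mix_val]; ring

theorem mix_zero (p q : Lottery X) (h0 : (0 : ℝ) ≤ 0) (h1 : (0 : ℝ) ≤ 1) : mix p q 0 h0 h1 = q :=
  ext fun x => by simp only [mix_val]; ring

theorem mix_one (p q : Lottery X) (h0 : (0 : ℝ) ≤ 1) (h1 : (1 : ℝ) ≤ 1) : mix p q 1 h0 h1 = p :=
  ext fun x => by simp only [mix_val]; ring

theorem mix_comm (p q : Lottery X) (α : ℝ) (h0 : 0 ≤ α) (h1 : α ≤ 1) :
    mix p q α h0 h1 = mix q p (1 - α) (by linarith) (by linarith) :=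
  ext fun x => by simp only [mix_val]; ring

open scoped Classical in
noncomputable def pure (x₀ : X) : Lottery X :=
  ⟨Pi.single x₀ 1, fun x => by by_cases h : x = x₀ <;> simp [h], by simp⟩

theorem pure_val_self (x₀ : X) : (pure x₀).val x₀ = 1 := by
  simp [pure]

theorem pure_val_of_ne {x x₀ : X} (h : x ≠ x₀) : (pure x₀).val x = 0 := by
  simp [pure, h]

theorem eq_pure_of_val_eq_one {p : Lottery X} {x₀ : X} (h : p.val x₀ = 1) : p = pure x₀ := by
  classical
  have hrest : ∑ x ∈ Finset.univ.erase x₀, p.val x = 0 := by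
    linarith [Finset.add_sum_erase Finset.univ p.val (Finset.mem_univ x₀), p.sum_val]
  refine ext fun x => ?_
  rcases eq_or_ne x x₀ with rfl | hx
  · rw [h, pure_val_self]
  · rw [pure_val_of_ne hx]
    exact (Finset.sum_eq_zero_iff_of_nonneg fun y _ => p.val_nonneg y).1 hrest x
      (Finset.mem_erase.2 ⟨hx, Finset.mem_univ x⟩)

theorem exists_eq_mix_pure (p : Lottery X) {x₀ : X} (h : p.val x₀ ≠ 1) :
    ∃ p' : Lottery X, Function.support p'.val ⊆ Function.support p.val \ {x₀} ∧
      p = mix (pure x₀) p' (p.val x₀) (p.val_nonneg x₀) (p.val_le_one x₀) := by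
  have hpos : 0 < 1 - p.val x₀ := sub_pos.2 (lt_of_le_of_ne (p.val_le_one x₀) h)
  let p' : Lottery X := ⟨fun x => (p.val x - p.val x₀ * (pure x₀).val x) / (1 - p.val x₀),
    fun x => by
      refine div_nonneg ?_ hpos.le
      rcases eq_or_ne x x₀ with rfl | hx
      · simp [pure_val_self]
      · simpa [pure_val_of_ne hx] using p.val_nonneg x,
    by
      rw [← Finset.sum_div, Finset.sum_sub_distrib, ← Finset.mul_sum, p.sum_val, (pure x₀).sum_val,
        mul_one, div_self hpos.ne']⟩
  refine ⟨p', fun x hx => ?_, ext fun x => ?_⟩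
  · rcases eq_or_ne x x₀ with rfl | hne
    · simp [p', pure_val_self] at hx
    · refine ⟨fun hp => hx ?_, hne⟩
      simp [p', hp, pure_val_of_ne hne]
  · show p.val x = p.val x₀ * (pure x₀).val x +
      (1 - p.val x₀) * ((p.val x - p.val x₀ * (pure x₀).val x) / (1 - p.val x₀))
    field_simp
    ring

theorem induction_pure_mix {P : Lottery X → Prop} (pure : ∀ x, P (pure x))
    (mix : ∀ x p a (h0 : 0 ≤ a) (h1 : a ≤ 1), P p → P (mix (Lottery.pure x) p a h0 h1))
    (p : Lottery X) : P p := by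
  classical
  suffices ∀ s : Finset X, ∀ p : Lottery X, Function.support p.val ⊆ s → P p from
    this Finset.univ p (by simp)
  intro s
  induction s using Finset.induction_on with
  | empty =>
    intro p hp
    have : p.val = 0 := Function.support_eq_empty_iff.1 (by simpa using hp)
    simpa [this] using p.sum_val
  | insert x₀ s _ ih =>
    intro p hp
    by_cases h : p.val x₀ = 1
    · exact eq_pure_of_val_eq_one h ▸ pure x₀
    obtain ⟨p', hsupp, hp'⟩ := p.exists_eq_mix_pure h
    rw [hp']
    refine mix _ _ _ _ _ (ih p' fun x hx => ?_)
    obtain ⟨hxp, hne⟩ := hsupp hx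
    exact (Finset.mem_insert.1 (hp hxp)).resolve_left hne

end Lottery

section ExpectedUtility

variable {X : Type} [Fintype X]

open Lottery

theorem expectedUtility_pure (x₀ : X) (u : X → ℝ) : expectedUtility (pure x₀) u = u x₀ := by
  rw [expectedUtility, Finset.sum_eq_single x₀ (fun x _ hx => by rw [pure_val_of_ne hx, zero_mul])
    (by simp), pure_val_self, one_mul]

theorem expectedUtility_mix (p q : Lottery X) (α : ℝ) (h0 : 0 ≤ α) (h1 : α ≤ 1) (u : X → ℝ) :
    expectedUtility (mix p q α h0 h1) u =
      α * expectedUtility p u + (1 - α) * expectedUtility q u := by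
  simp only [expectedUtility, mix_val, Finset.mul_sum, ← Finset.sum_add_distrib]
  exact Finset.sum_congr rfl fun x _ => by ring

theorem expectedUtility_nonneg (p : Lottery X) {u : X → ℝ} (hu : ∀ x, 0 ≤ u x) :
    0 ≤ expectedUtility p u :=
  Finset.sum_nonneg fun x _ => mul_nonneg (p.val_nonneg x) (hu x)

theorem expectedUtility_le_one (p : Lottery X) {u : X → ℝ} (hu : ∀ x, u x ≤ 1) :
    expectedUtility p u ≤ 1 :=
  (Finset.sum_le_sum fun x _ => mul_le_of_le_one_right (p.val_nonneg x) (hu x)).trans_eq p.sum_val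

end ExpectedUtility

section Preference

variable {X : Type} [Fintype X] {pref : Lottery X → Lottery X → Prop} {p p' q q' r b w : Lottery X}

open Lottery

theorem pref_refl (hC : PrefComplete pref) (p : Lottery X) : pref p p := (hC p p).elim id id

theorem pref_of_not_pref (hC : PrefComplete pref) (h : ¬pref p q) : pref q p :=
  (hC p q).resolve_left h

theorem strictPref_of_strictPref_of_pref (hT : PrefTransitive pref) (h₁ : strictPref pref p q)
    (h₂ : pref q r) : strictPref pref p r :=
  ⟨hT _ _ _ h₁.1 h₂, fun hrp => h₁.2 (hT _ _ _ h₂ hrp)⟩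

theorem strictPref_of_pref_of_strictPref (hT : PrefTransitive pref) (h₁ : pref p q)
    (h₂ : strictPref pref q r) : strictPref pref p r :=
  ⟨hT _ _ _ h₁ h₂.1, fun hrp => h₂.2 (hT _ _ _ hrp h₁)⟩

theorem pref_iff_of_indiff (hT : PrefTransitive pref) (hp : indiff pref p p')
    (hq : indiff pref q q') : pref p q ↔ pref p' q' :=
  ⟨fun h => hT _ _ _ hp.2 (hT _ _ _ h hq.1), fun h => hT _ _ _ hp.1 (hT _ _ _ h hq.2)⟩

theorem mix_pref_mix_left (hC : PrefComplete pref) (hI : PrefIndependence pref)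
    (hII : PrefIndepIndiff pref) (h : pref p p') (q : Lottery X) (a : ℝ) (h0 : 0 ≤ a)
    (h1 : a ≤ 1) : pref (mix p q a h0 h1) (mix p' q a h0 h1) := by
  rcases h0.eq_or_lt with rfl | ha
  · rw [mix_zero, mix_zero]
    exact pref_refl hC q
  by_cases h' : pref p' p
  · exact (hII p p' q a ⟨ha, h1⟩ ⟨h, h'⟩).1
  · exact (hI p p' q a ⟨ha, h1⟩ ⟨h, h'⟩).1

theorem mix_pref_mix (hC : PrefComplete pref) (hT : PrefTransitive pref)
    (hI : PrefIndependence pref) (hII : PrefIndepIndiff pref) (hp : pref p p') (hq : pref q q')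
    (a : ℝ) (h0 : 0 ≤ a) (h1 : a ≤ 1) : pref (mix p q a h0 h1) (mix p' q' a h0 h1) := by
  refine hT _ _ _ (mix_pref_mix_left hC hI hII hp q a h0 h1) ?_
  rw [mix_comm p', mix_comm p']
  exact mix_pref_mix_left hC hI hII hq _ _ _ _

theorem indiff_mix_mix (hC : PrefComplete pref) (hT : PrefTransitive pref)
    (hI : PrefIndependence pref) (hII : PrefIndepIndiff pref) (hp : indiff pref p p')
    (hq : indiff pref q q') (a : ℝ) (h0 : 0 ≤ a) (h1 : a ≤ 1) :
    indiff pref (mix p q a h0 h1) (mix p' q' a h0 h1) :=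
  ⟨mix_pref_mix hC hT hI hII hp.1 hq.1 a h0 h1, mix_pref_mix hC hT hI hII hp.2 hq.2 a h0 h1⟩

theorem pref_mix_of_pref (hC : PrefComplete pref) (hT : PrefTransitive pref)
    (hI : PrefIndependence pref) (hII : PrefIndepIndiff pref) (hp : pref r p) (hq : pref r q)
    (a : ℝ) (h0 : 0 ≤ a) (h1 : a ≤ 1) : pref r (mix p q a h0 h1) :=
  mix_self r a h0 h1 ▸ mix_pref_mix hC hT hI hII hp hq a h0 h1

theorem mix_pref_of_pref (hC : PrefComplete pref) (hT : PrefTransitive pref)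
    (hI : PrefIndependence pref) (hII : PrefIndepIndiff pref) (hp : pref p r) (hq : pref q r)
    (a : ℝ) (h0 : 0 ≤ a) (h1 : a ≤ 1) : pref (mix p q a h0 h1) r :=
  mix_self r a h0 h1 ▸ mix_pref_mix hC hT hI hII hp hq a h0 h1

theorem pref_of_forall_pref_pure (hC : PrefComplete pref) (hT : PrefTransitive pref)
    (hI : PrefIndependence pref) (hII : PrefIndepIndiff pref) (h : ∀ x, pref r (pure x))
    (p : Lottery X) : pref r p :=
  induction_pure_mix (P := pref r) h
    (fun _ _ _ _ _ hp => pref_mix_of_pref hC hT hI hII (h _) hp _ _ _) p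

theorem pref_of_forall_pure_pref (hC : PrefComplete pref) (hT : PrefTransitive pref)
    (hI : PrefIndependence pref) (hII : PrefIndepIndiff pref) (h : ∀ x, pref (pure x) r)
    (p : Lottery X) : pref p r :=
  induction_pure_mix (P := (pref · r)) h
    (fun _ _ _ _ _ hp => mix_pref_of_pref hC hT hI hII (h _) hp _ _ _) p

theorem strictPref_mix_of_lt (hI : PrefIndependence pref) (hbw : strictPref pref b w) {α β : ℝ}
    (hβ0 : 0 ≤ β) (hβα : β < α) (hα1 : α ≤ 1) :
    strictPref pref (mix b w α (by linarith) hα1) (mix b w β hβ0 (by linarith)) := by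
  have hβ1 : 0 < 1 - β := by linarith
  have hb : strictPref pref b (mix b w β hβ0 (by linarith)) := by
    have := hI b w b (1 - β) ⟨hβ1, by linarith⟩ hbw
    rwa [mix_self, ← mix_comm] at this
  have hγ0 : 0 < (α - β) / (1 - β) := div_pos (by linarith) hβ1
  have hγ1 : (α - β) / (1 - β) ≤ 1 := (div_le_one hβ1).2 (by linarith)
  have := hI _ _ (mix b w β hβ0 (by linarith)) _ ⟨hγ0, hγ1⟩ hb
  rw [mix_self] at this
  convert this using 1
  refine ext fun x => ?_
  simp only [mix_val]
  field_simp
  ring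

theorem mix_pref_mix_iff (hC : PrefComplete pref) (hI : PrefIndependence pref)
    (hbw : strictPref pref b w) {α β : ℝ} (hα0 : 0 ≤ α) (hα1 : α ≤ 1) (hβ0 : 0 ≤ β)
    (hβ1 : β ≤ 1) : pref (mix b w α hα0 hα1) (mix b w β hβ0 hβ1) ↔ β ≤ α := by
  refine ⟨fun h => not_lt.1 fun hαβ => (strictPref_mix_of_lt hI hbw hα0 hαβ hβ1).2 h,
    fun hβα => ?_⟩
  rcases hβα.eq_or_lt with rfl | hβα
  · exact pref_refl hC _
  · exact (strictPref_mix_of_lt hI hbw hβ0 hβα hα1).1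

end Preference

section Calibration

variable {X : Type} [Fintype X] {pref : Lottery X → Lottery X → Prop} {q b w : Lottery X}

open Lottery

theorem exists_lt_mix_strictPref (hT : PrefTransitive pref) (hCo : PrefContinuity pref) {t : ℝ}
    (ht0 : 0 ≤ t) (ht1 : t ≤ 1) (hmq : strictPref pref (mix b w t ht0 ht1) q)
    (hqw : pref q w) :
    ∃ α, ∃ h : 0 ≤ α ∧ α ≤ 1, α < t ∧ strictPref pref (mix b w α h.1 h.2) q := by
  have hwm : ¬pref w (mix b w t ht0 ht1) := fun h =>
    (strictPref_of_pref_of_strictPref hT h hmq).2 hqw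
  obtain ⟨a, _, ⟨ha0, ha1, _⟩, hmix, -⟩ := hCo _ _ _ hmq.1 hqw hwm
  have ht : 0 < t := ht0.lt_of_ne <| by
    rintro rfl
    rw [mix_zero] at hmq
    exact hmq.2 hqw
  refine ⟨a * t, ⟨by positivity, by nlinarith⟩, by nlinarith, ?_⟩
  convert hmix using 1
  exact ext fun x => by simp only [mix_val]; ring

theorem exists_gt_strictPref_mix (hT : PrefTransitive pref) (hCo : PrefContinuity pref) {t : ℝ}
    (ht0 : 0 ≤ t) (ht1 : t ≤ 1) (hbq : pref b q) (hqm : strictPref pref q (mix b w t ht0 ht1)) :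
    ∃ α, ∃ h : 0 ≤ α ∧ α ≤ 1, t < α ∧ strictPref pref q (mix b w α h.1 h.2) := by
  have hmb : ¬pref (mix b w t ht0 ht1) b := fun h => hqm.2 (hT _ _ _ h hbq)
  obtain ⟨_, β, ⟨_, _, hβ0, hβ1⟩, -, hmix⟩ := hCo _ _ _ hbq hqm.1 hmb
  have ht : t < 1 := ht1.lt_of_ne <| by
    rintro rfl
    rw [mix_one] at hqm
    exact hqm.2 hbq
  refine ⟨β + (1 - β) * t, ⟨by nlinarith, by nlinarith⟩, by nlinarith, ?_⟩
  convert hmix using 1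
  exact ext fun x => by simp only [mix_val]; ring

/-- The weight is the supremum of the `α` with `q ⪰ mix b w α`; continuity rules out a strict
preference either way at the supremum. -/
theorem exists_indiff_mix (hC : PrefComplete pref) (hT : PrefTransitive pref)
    (hCo : PrefContinuity pref) (hI : PrefIndependence pref) (hbw : strictPref pref b w)
    (hbq : pref b q) (hqw : pref q w) :
    ∃ α, ∃ h : 0 ≤ α ∧ α ≤ 1, indiff pref q (mix b w α h.1 h.2) := by
  set S : Set ℝ := {α | ∃ h : 0 ≤ α ∧ α ≤ 1, pref q (mix b w α h.1 h.2)}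
  have h0S : (0 : ℝ) ∈ S := ⟨⟨le_rfl, zero_le_one⟩, by rwa [mix_zero]⟩
  have hS1 : ∀ α ∈ S, α ≤ 1 := fun α hα => hα.1.2
  have hbdd : BddAbove S := ⟨1, hS1⟩
  have ht0 : 0 ≤ sSup S := le_csSup hbdd h0S
  have ht1 : sSup S ≤ 1 := csSup_le ⟨0, h0S⟩ hS1
  refine ⟨sSup S, ⟨ht0, ht1⟩, by_contra fun h => ?_, by_contra fun h => ?_⟩
  · obtain ⟨α, hα, hαt, hαq⟩ :=
      exists_lt_mix_strictPref hT hCo ht0 ht1 ⟨pref_of_not_pref hC h, h⟩ hqw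
    have : sSup S ≤ α := csSup_le ⟨0, h0S⟩ fun γ ⟨hγ, hqγ⟩ => not_lt.1 fun hαγ =>
      (strictPref_of_strictPref_of_pref hT (strictPref_mix_of_lt hI hbw hα.1 hαγ hγ.2)
        hαq.1).2 hqγ
    linarith
  · obtain ⟨α, hα, htα, hqα⟩ :=
      exists_gt_strictPref_mix hT hCo ht0 ht1 hbq ⟨pref_of_not_pref hC h, h⟩
    linarith [le_csSup hbdd ⟨hα, hqα.1⟩]

theorem indiff_mix_expectedUtility (hC : PrefComplete pref) (hT : PrefTransitive pref)
    (hI : PrefIndependence pref) (hII : PrefIndepIndiff pref) {u : X → ℝ}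
    (hu : ∀ x, 0 ≤ u x ∧ u x ≤ 1)
    (hpure : ∀ x, indiff pref (pure x) (mix b w (u x) (hu x).1 (hu x).2)) (p : Lottery X) :
    indiff pref p (mix b w (expectedUtility p u) (expectedUtility_nonneg p fun x => (hu x).1)
      (expectedUtility_le_one p fun x => (hu x).2)) := by
  induction p using induction_pure_mix with
  | pure x =>
    convert hpure x using 2
    exact expectedUtility_pure x u
  | mix x p a h0 h1 ih =>
    convert indiff_mix_mix hC hT hI hII (hpure x) ih a h0 h1 using 1
    refine ext fun y => ?_
    simp only [mix_val, expectedUtility_mix, expectedUtility_pure]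
    ring

end Calibration

theorem vnm_utility_existence {X : Type} [Fintype X] [Nonempty X]
    (pref : Lottery X → Lottery X → Prop)
    (h_complete : PrefComplete pref) (h_trans : PrefTransitive pref)
    (h_cont : PrefContinuity pref)
    (h_indep : PrefIndependence pref) (h_indep_indiff : PrefIndepIndiff pref) :
    ∃ u : X → ℝ, ∀ p q : Lottery X,
      pref p q ↔ expectedUtility p u ≥ expectedUtility q u := by
  obtain ⟨xb, hxb⟩ := exists_forall_of_total_of_trans
    (fun x y => pref (Lottery.pure x) (Lottery.pure y)) (fun _ _ => h_complete _ _)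
    (fun _ _ _ => h_trans _ _ _)
  obtain ⟨xw, hxw⟩ := exists_forall_of_total_of_trans
    (fun x y => pref (Lottery.pure y) (Lottery.pure x)) (fun _ _ => h_complete _ _)
    (fun _ _ _ h₁ h₂ => h_trans _ _ _ h₂ h₁)
  have hb := pref_of_forall_pref_pure h_complete h_trans h_indep h_indep_indiff hxb
  have hw := pref_of_forall_pure_pref h_complete h_trans h_indep h_indep_indiff hxw
  by_cases hwb : pref (Lottery.pure xw) (Lottery.pure xb)
  · refine ⟨0, fun p q => iff_of_true (h_trans _ _ _ (hw p) (h_trans _ _ _ hwb (hb q))) ?_⟩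
    simp [expectedUtility]
  have hbw : strictPref pref (Lottery.pure xb) (Lottery.pure xw) := ⟨hb _, hwb⟩
  choose u hu hpure using fun x =>
    exists_indiff_mix h_complete h_trans h_cont h_indep hbw (hb _) (hw (Lottery.pure x))
  refine ⟨u, fun p q => ?_⟩
  rw [pref_iff_of_indiff h_trans
    (indiff_mix_expectedUtility h_complete h_trans h_indep h_indep_indiff hu hpure p)
    (indiff_mix_expectedUtility h_complete h_trans h_indep h_indep_indiff hu hpure q),
    mix_pref_mix_iff h_complete h_indep hbw, ge_iff_le]
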